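/- arXiv:2201.04842 — 4 statements merged into one kernel-verified Lean document; each statement's English description precedes it below -/
import Mathlib

section
/- Let u(x) = x^n + ρ_1 x^{n-1} + ... + ρ_n be a monic polynomial of degree n and let V_1^{(k)} be defined recursively by the companion-type recursion V^{(k+1)} = R V^{(k)} with V^{(0)} = (0,...,0,-1)^T, where R is the n×n matrix with first column (-ρ_1,...,-ρ_n)^T and identity shifted to the right. Then for every natural number s, the polynomial part of x^{n+s}/u(x) equals -Σ_{r=0}^{s} V_1^{(n+s-r-1)} x^r. -/
open Polynomial Finset

section aux
variable {K : Type*} [Field K]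

private lemma vsmall (n : ℕ) (hn : 0 < n) (ρ : Fin n → K) (V : ℕ → Fin n → K)
    (hV0 : ∀ i : Fin n, V 0 i = if (i : ℕ) = n - 1 then -1 else 0)
    (hVs : ∀ α (i : Fin n), V (α + 1) i =
      -ρ i * V α ⟨0, hn⟩ + (if h : (i : ℕ) + 1 < n then V α ⟨(i : ℕ) + 1, h⟩ else 0)) :
    ∀ m, m < n → ∀ i : Fin n, V m i = if (i : ℕ) = n - 1 - m then -1 else 0 := by
  intro m
  induction m with
  | zero => intro _ i; simpa using hV0 i
  | succ m ih =>
    intro hm i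
    have hm' : m < n := by omega
    rw [hVs m i, ih hm']
    have h0 : (0 : ℕ) ≠ n - 1 - m := by omega
    rw [if_neg h0, mul_zero, zero_add]
    split_ifs with h h1 h1
    · rw [ih hm']
      have hv : ((⟨(i:ℕ)+1, h⟩ : Fin n) : ℕ) = (i:ℕ)+1 := rfl
      rw [hv, if_pos (by omega)]
    · rw [ih hm']
      have hv : ((⟨(i:ℕ)+1, h⟩ : Fin n) : ℕ) = (i:ℕ)+1 := rfl
      rw [hv, if_neg (by omega)]
    · exfalso; omega
    · rfl

private lemma mainlem (n : ℕ) (hn : 0 < n) (ρ : Fin n → K) (V : ℕ → Fin n → K)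
    (hV0 : ∀ i : Fin n, V 0 i = if (i : ℕ) = n - 1 then -1 else 0)
    (hVs : ∀ α (i : Fin n), V (α + 1) i =
      -ρ i * V α ⟨0, hn⟩ + (if h : (i : ℕ) + 1 < n then V α ⟨(i : ℕ) + 1, h⟩ else 0)) :
    ∀ m : ℕ, (X : K[X]) ^ m =
      (X ^ n + ∑ i : Fin n, C (ρ i) * X ^ (n - 1 - (i : ℕ)))
        * (-(∑ r ∈ Finset.range (m + 1 - n), C (V (m - r - 1) ⟨0, hn⟩) * X ^ r))
      + (-(∑ i : Fin n, C (V m i) * X ^ (n - 1 - (i : ℕ)))) := by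
  set u : K[X] := X ^ n + ∑ i : Fin n, C (ρ i) * X ^ (n - 1 - (i : ℕ)) with hu
  intro m
  induction m with
  | zero =>
    have h1 : ∀ i : Fin n, C (V 0 i) * (X:K[X]) ^ (n - 1 - (i:ℕ))
        = if i = (⟨n-1, by omega⟩ : Fin n) then -X ^ (0:ℕ) else 0 := by
      intro i
      rw [hV0 i]
      rcases eq_or_ne i (⟨n-1, by omega⟩ : Fin n) with h | h
      · subst h
        rw [if_pos rfl, if_pos rfl]
        have hv : ((⟨n-1, by omega⟩ : Fin n) : ℕ) = n - 1 := rfl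
        rw [hv, Nat.sub_self]
        simp
      · rw [if_neg (by simpa [Fin.ext_iff] using h), if_neg h]; simp
    rw [Finset.sum_congr rfl (fun i _ => h1 i), Finset.sum_ite_eq' Finset.univ,
      if_pos (Finset.mem_univ _)]
    have h2 : 0 + 1 - n = 0 := by omega
    rw [h2]
    simp
  | succ m ih =>
    have hXm : (X : K[X]) ^ (m + 1) = X * X ^ m := by ring
    rw [hXm, ih, mul_add, mul_comm (X : K[X]) (u * _), mul_assoc]
    set c : K := V m ⟨0, hn⟩ with hc
    -- remainder identity
    have hrem : (-(∑ i : Fin n, C (V (m+1) i) * (X:K[X]) ^ (n - 1 - (i : ℕ))))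
        = X * (-(∑ i : Fin n, C (V m i) * X ^ (n - 1 - (i : ℕ)))) + C c * u := by
      set W : ℕ → K := fun k => if h : k < n then V m ⟨k, h⟩ else 0 with hW
      have hW0 : W 0 = c := by simp [hW, hn]; exact hc.symm
      have hVW : ∀ i : Fin n, V (m+1) i = -ρ i * c + W ((i:ℕ)+1) := by
        intro i
        rw [hVs m i]
      have e1 : (∑ i : Fin n, C (V (m+1) i) * (X:K[X]) ^ (n - 1 - (i : ℕ)))
          = -(C c * ∑ i : Fin n, C (ρ i) * X ^ (n - 1 - (i:ℕ)))
            + ∑ i : Fin n, C (W ((i:ℕ)+1)) * X ^ (n - 1 - (i:ℕ)) := by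
        rw [Finset.mul_sum, ← Finset.sum_neg_distrib, ← Finset.sum_add_distrib]
        refine Finset.sum_congr rfl fun i _ => ?_
        rw [hVW i, map_add, add_mul]
        congr 1
        rw [show -ρ i * c = -(ρ i * c) by ring, map_neg, map_mul]
        ring
      have e3 : (X:K[X]) * (∑ i : Fin n, C (V m i) * X ^ (n - 1 - (i:ℕ)))
          = ∑ i : Fin n, C (V m i) * X ^ (n - (i:ℕ)) := by
        rw [Finset.mul_sum]
        refine Finset.sum_congr rfl fun i _ => ?_
        rw [mul_left_comm, ← pow_succ']
        have hi := i.isLt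
        congr 2
        omega
      have e2 : (∑ i : Fin n, C (V m i) * (X:K[X]) ^ (n - (i : ℕ)))
          = C c * X ^ n + ∑ i : Fin n, C (W ((i:ℕ)+1)) * X ^ (n - 1 - (i:ℕ)) := by
        have l1 : (∑ i : Fin n, C (V m i) * (X:K[X]) ^ (n - (i : ℕ)))
            = ∑ k ∈ Finset.range n, C (W k) * X ^ (n - k) := by
          rw [← Fin.sum_univ_eq_sum_range (fun k => C (W k) * (X:K[X]) ^ (n - k))]
          refine Finset.sum_congr rfl fun i _ => ?_
          simp [hW, i.isLt]
        have l2 : (∑ i : Fin n, C (W ((i:ℕ)+1)) * (X:K[X]) ^ (n - 1 - (i:ℕ)))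
            = ∑ k ∈ Finset.range n, C (W (k+1)) * X ^ (n - 1 - k) := by
          rw [← Fin.sum_univ_eq_sum_range (fun k => C (W (k+1)) * (X:K[X]) ^ (n - 1 - k))]
        rw [l1, l2]
        obtain ⟨n', rfl⟩ : ∃ n', n = n' + 1 := ⟨n - 1, by omega⟩
        rw [Finset.sum_range_succ' (fun k => C (W k) * (X:K[X]) ^ (n' + 1 - k)),
            Finset.sum_range_succ (fun k => C (W (k+1)) * (X:K[X]) ^ (n' + 1 - 1 - k))]
        have hWn : W (n' + 1) = 0 := by simp [hW]
        rw [hWn, hW0]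
        simp only [map_zero, zero_mul, add_zero, Nat.sub_zero]
        rw [add_comm]
        congr 1
        refine Finset.sum_congr rfl fun k hk => ?_
        rw [Finset.mem_range] at hk
        have he : n' + 1 - (k + 1) = n' + 1 - 1 - k := by omega
        rw [he]
      rw [hu, e1, mul_neg, e3, e2]
      ring
    -- quotient identity
    have hquot : (-(∑ r ∈ Finset.range (m + 2 - n), C (V (m + 1 - r - 1) ⟨0, hn⟩) * (X:K[X]) ^ r))
        = X * (-(∑ r ∈ Finset.range (m + 1 - n), C (V (m - r - 1) ⟨0, hn⟩) * X ^ r)) - C c := by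
      rcases lt_or_ge m (n - 1) with hm | hm
      · have h1 : m + 2 - n = 0 := by omega
        have h2 : m + 1 - n = 0 := by omega
        have hc0 : c = 0 := by
          rw [hc, vsmall n hn ρ V hV0 hVs m (by omega)]
          have hv : ((⟨0, hn⟩ : Fin n) : ℕ) = 0 := rfl
          rw [hv, if_neg (by omega)]
        rw [h1, h2, hc0]
        simp
      · have h1 : m + 2 - n = (m + 1 - n) + 1 := by omega
        rw [h1, Finset.sum_range_succ' (fun r => C (V (m + 1 - r - 1) ⟨0, hn⟩) * (X:K[X]) ^ r)]
        have h3 : V (m + 1 - 0 - 1) (⟨0, hn⟩ : Fin n) = c := by norm_num [hc]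
        rw [h3, mul_neg, Finset.mul_sum, neg_add, sub_eq_add_neg]
        congr 1
        · rw [neg_inj]
          refine Finset.sum_congr rfl fun r _ => ?_
          have h2 : m + 1 - (r+1) - 1 = m - r - 1 := by omega
          rw [h2, pow_succ']
          ring
        · simp
    rw [hrem, hquot]
    ring
end aux

/-- Lemma 4(i) of the paper: with `u(x) = x^n + ρ₁x^{n-1} + ⋯ + ρ_n` and the basic
separable potentials `V^{(α)} = R^α V^{(0)}`, `V^{(0)} = (0,…,0,-1)ᵀ`, for every
`s ∈ ℕ` the polynomial part of `x^{n+s}/u(x)` equals `-∑_{r=0}^s V₁^{(n+s-r-1)} x^r`. -/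
theorem stmt7 {K : Type*} [Field K] (n : ℕ) (hn : 0 < n) (ρ : Fin n → K) :
    letI R : Matrix (Fin n) (Fin n) K := fun i j =>
      if (j : ℕ) = 0 then -ρ i else if (j : ℕ) = (i : ℕ) + 1 then 1 else 0
    letI V0 : Fin n → K := fun i => if (i : ℕ) = n - 1 then -1 else 0
    letI V : ℕ → Fin n → K := fun α => (R ^ α).mulVec V0
    letI u : K[X] := X ^ n + ∑ i : Fin n, C (ρ i) * X ^ (n - 1 - (i : ℕ))
    ∀ s : ℕ, (X ^ (n + s)) /ₘ u
      = -∑ r ∈ Finset.range (s + 1), C (V (n + s - r - 1) ⟨0, hn⟩) * X ^ r := by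
  intro s
  set R : Matrix (Fin n) (Fin n) K := (fun i j =>
      if (j : ℕ) = 0 then -ρ i else if (j : ℕ) = (i : ℕ) + 1 then 1 else 0) with hR
  set V : ℕ → Fin n → K :=
      (fun α => (R ^ α).mulVec (fun i => if (i : ℕ) = n - 1 then -1 else 0)) with hV
  set u : K[X] := X ^ n + ∑ i : Fin n, C (ρ i) * X ^ (n - 1 - (i : ℕ)) with hu
  have hV0 : ∀ i : Fin n, V 0 i = if (i : ℕ) = n - 1 then -1 else 0 := by
    intro i; simp [hV, Matrix.one_mulVec]
  have hVs : ∀ α (i : Fin n), V (α + 1) i =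
      -ρ i * V α ⟨0, hn⟩ + (if h : (i : ℕ) + 1 < n then V α ⟨(i : ℕ) + 1, h⟩ else 0) := by
    intro α i
    have hpow : R ^ (α + 1) = R * R ^ α := by rw [pow_succ']
    have hstep : V (α + 1) i = R.mulVec (V α) i := by
      rw [hV]
      show ((R ^ (α+1)).mulVec _) i = _
      rw [hpow, ← Matrix.mulVec_mulVec]
    rw [hstep]
    show (∑ j : Fin n, R i j * V α j) = _
    have hsplit : ∀ j : Fin n, R i j * V α j =
        (if j = (⟨0, hn⟩ : Fin n) then -ρ i * V α j else 0)
        + (if (j : ℕ) = (i : ℕ) + 1 then V α j else 0) := by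
      intro j
      show (if (j : ℕ) = 0 then -ρ i else if (j : ℕ) = (i : ℕ) + 1 then 1 else 0) * V α j = _
      rcases eq_or_ne (j : ℕ) 0 with h0 | h0
      · rw [if_pos h0, if_pos (by simpa [Fin.ext_iff] using h0), if_neg (by omega), add_zero]
      · have hj0 : j ≠ (⟨0, hn⟩ : Fin n) := fun hh => h0 (by rw [hh])
        rw [if_neg h0, if_neg hj0, zero_add]
        split_ifs with h1
        · rw [one_mul]
        · rw [zero_mul]
    rw [Finset.sum_congr rfl (fun j _ => hsplit j), Finset.sum_add_distrib,
      Finset.sum_ite_eq' Finset.univ, if_pos (Finset.mem_univ _)]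
    congr 1
    split_ifs with h
    · have hj : ∀ j : Fin n, (if (j : ℕ) = (i : ℕ) + 1 then V α j else 0)
          = if j = (⟨(i:ℕ)+1, h⟩ : Fin n) then V α j else 0 := by
        intro j; simp [Fin.ext_iff]
      rw [Finset.sum_congr rfl (fun j _ => hj j), Finset.sum_ite_eq' Finset.univ,
        if_pos (Finset.mem_univ _)]
    · refine Finset.sum_eq_zero fun j _ => ?_
      have hj := j.isLt
      rw [if_neg (by omega)]
  have key := mainlem n hn ρ V hV0 hVs (n + s)
  have hus : n + s + 1 - n = s + 1 := by omega
  rw [hus, ← hu] at key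
  have hdlt : ∀ f : Fin n → K,
      (∑ i : Fin n, C (f i) * (X:K[X]) ^ (n - 1 - (i:ℕ))).degree < (n : WithBot ℕ) := by
    intro f
    refine lt_of_le_of_lt (Polynomial.degree_sum_le _ _) ?_
    rw [Finset.sup_lt_iff (by exact_mod_cast WithBot.bot_lt_coe n)]
    intro i _
    refine lt_of_le_of_lt (Polynomial.degree_C_mul_X_pow_le _ _) ?_
    exact_mod_cast (by have := i.isLt; omega : n - 1 - (i:ℕ) < n)
  have humonic : u.Monic := by
    rw [hu]
    exact Polynomial.monic_X_pow_add (hdlt ρ)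
  have hdu : u.degree = n := by
    rw [hu, Polynomial.degree_add_eq_left_of_degree_lt, Polynomial.degree_X_pow]
    rw [Polynomial.degree_X_pow]
    exact hdlt ρ
  have hdeg : (-(∑ i : Fin n, C (V (n+s) i) * (X:K[X]) ^ (n - 1 - (i : ℕ)))).degree
      < u.degree := by
    rw [Polynomial.degree_neg, hdu]
    exact hdlt _
  have hpair : (-(∑ i : Fin n, C (V (n+s) i) * (X:K[X]) ^ (n - 1 - (i : ℕ))))
      + u * (-(∑ r ∈ Finset.range (s + 1), C (V (n + s - r - 1) ⟨0, hn⟩) * (X:K[X]) ^ r))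
      = X ^ (n + s) := by rw [key]; ring
  have := Polynomial.div_modByMonic_unique
    (-(∑ r ∈ Finset.range (s + 1), C (V (n + s - r - 1) ⟨0, hn⟩) * (X:K[X]) ^ r))
    (-(∑ i : Fin n, C (V (n+s) i) * (X:K[X]) ^ (n - 1 - (i : ℕ)))) humonic
    ⟨hpair, hdeg⟩
  exact this.1
end

section
/- With u(x) = x^n + ρ_1 x^{n-1} + ... + ρ_n, ρ_n ≠ 0, and V^{(-α)} := R^{-α} V^{(0)} (negative powers of the invertible companion-type matrix R), for every s ≥ 1 the Laurent-polynomial part of x^{-s}/u(x) (in negative powers of x) equals Σ_{r=1}^{s} V_1^{(-s+r-1)} x^{-r}, meaning x^{-s}/u(x) - Σ_{r=1}^s V_1^{(-s+r-1)} x^{-r} = -q(x)/u(x) with q a polynomial of degree < n. -/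
open Polynomial Finset

lemma auxpoly {K : Type*} [Field K] (m : ℕ) (ρ' : ℕ → K) (w : ℕ → ℕ → K)
    (hw0 : ∀ k, w 0 k = if k = m then -1 else 0)
    (hrec : ∀ α k, k < m → w α k = -(ρ' k) * w (α+1) 0 + w (α+1) (k+1))
    (hlast : ∀ α, w α m = -(ρ' m) * w (α+1) 0) :
    ∀ s : ℕ, (1 : K[X]) - (∑ j ∈ Finset.range s, C (w (j+1) 0) * X ^ j)
        * (X ^ (m+1) + ∑ i ∈ Finset.range (m+1), C (ρ' i) * X ^ (m - i))
      = -((∑ i ∈ Finset.range (m+1), C (w s i) * X ^ (m - i)) * X ^ s) := by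
  intro s
  induction s with
  | zero =>
    rw [Finset.sum_range_zero, zero_mul, sub_zero, pow_zero, mul_one]
    rw [Finset.sum_eq_single m]
    · simp [hw0]
    · intro b _ hb
      rw [hw0, if_neg hb, map_zero, zero_mul]
    · intro h
      exact absurd (Finset.self_mem_range_succ m) h
  | succ s ih =>
    have key : (∑ i ∈ Finset.range (m+1), C (w s i) * X ^ (m - i))
        + C (w (s+1) 0) * (X ^ (m+1) + ∑ i ∈ Finset.range (m+1), C (ρ' i) * X ^ (m - i))
        = (∑ i ∈ Finset.range (m+1), C (w (s+1) i) * X ^ (m - i)) * X := by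
      have L : (∑ i ∈ Finset.range (m+1), C (w s i) * X ^ (m - i))
          + C (w (s+1) 0) * (∑ i ∈ Finset.range (m+1), C (ρ' i) * X ^ (m - i))
          = ∑ i ∈ Finset.range m, C (w (s+1) (i+1)) * X ^ (m - i) := by
        rw [Finset.mul_sum, ← Finset.sum_add_distrib, Finset.sum_range_succ]
        have hz : C (w s m) * X ^ (m - m) + C (w (s+1) 0) * (C (ρ' m) * X ^ (m - m)) = 0 := by
          rw [Nat.sub_self, pow_zero, mul_one, mul_one, ← map_mul, ← map_add, hlast s]
          have h0 : -ρ' m * w (s+1) 0 + w (s+1) 0 * ρ' m = 0 := by ring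
          rw [h0, map_zero]
        rw [hz, add_zero]
        refine Finset.sum_congr rfl (fun i hi => ?_)
        rw [hrec s i (Finset.mem_range.mp hi), map_add, map_mul, map_neg]
        ring
      have R : (∑ i ∈ Finset.range (m+1), C (w (s+1) i) * X ^ (m - i)) * X
          = C (w (s+1) 0) * X ^ (m+1) + ∑ i ∈ Finset.range m, C (w (s+1) (i+1)) * X ^ (m - i) := by
        rw [Finset.sum_mul]
        have hterm : ∀ i ∈ Finset.range (m+1), (C (w (s+1) i) * X ^ (m - i)) * X
            = C (w (s+1) i) * X ^ (m - i + 1) := fun i _ => by rw [mul_assoc, ← pow_succ]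
        rw [Finset.sum_congr rfl hterm, Finset.sum_range_succ']
        simp only [Nat.sub_zero]
        rw [add_comm]
        congr 1
        refine Finset.sum_congr rfl fun i hi => ?_
        have := Finset.mem_range.mp hi
        congr 2
        omega
      rw [mul_add] at *
      linear_combination L - R
    rw [Finset.sum_range_succ, add_mul]
    linear_combination ih - (X:K[X])^s * key

/-- Lemma 4(ii) of the paper: with `u(x) = x^n + ρ₁x^{n-1} + ⋯ + ρ_n`, `ρ_n ≠ 0`,
and `V^{(-α)} = R^{-α} V^{(0)}`, for every `s ≥ 1` the Laurent-polynomial part of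
`x^{-s}/u(x)` equals `∑_{r=1}^s V₁^{(-s+r-1)} x^{-r}`, that is,
`x^{-s}/u(x) - ∑_{r=1}^s V₁^{(-s+r-1)} x^{-r} = -q(x)/u(x)` with `deg q < n`;
equivalently (after multiplying through by `x^s u(x)`):
`1 - (∑_{r=1}^s V₁^{(-(s-r+1))} x^{s-r})·u(x) = -q(x)·x^s`. -/
theorem stmt8 {K : Type*} [Field K] (n : ℕ) (hn : 0 < n) (ρ : Fin n → K)
    (hρn : ρ ⟨n - 1, Nat.sub_lt hn one_pos⟩ ≠ 0) :
    letI R : Matrix (Fin n) (Fin n) K := fun i j =>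
      if (j : ℕ) = 0 then -ρ i else if (j : ℕ) = (i : ℕ) + 1 then 1 else 0
    letI V0 : Fin n → K := fun i => if (i : ℕ) = n - 1 then -1 else 0
    letI Vneg : ℕ → Fin n → K := fun α => (R⁻¹ ^ α).mulVec V0
    letI u : K[X] := X ^ n + ∑ i : Fin n, C (ρ i) * X ^ (n - 1 - (i : ℕ))
    ∀ s : ℕ, 1 ≤ s → ∃ q : K[X], q.degree < (n : WithBot ℕ) ∧
      (1 : K[X]) - (∑ r ∈ Finset.Icc 1 s, C (Vneg (s - r + 1) ⟨0, hn⟩) * X ^ (s - r)) * u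
        = -(q * X ^ s) := by
  intro s hs
  beta_reduce
  set R : Matrix (Fin n) (Fin n) K := fun i j =>
    if (j : ℕ) = 0 then -ρ i else if (j : ℕ) = (i : ℕ) + 1 then 1 else 0 with hR
  set V0 : Fin n → K := fun i => if (i : ℕ) = n - 1 then -1 else 0 with hV0
  set ρn := ρ ⟨n - 1, Nat.sub_lt hn one_pos⟩ with hρ
  -- the explicit right inverse of R
  set S : Matrix (Fin n) (Fin n) K := fun i j =>
    if (j : ℕ) = n - 1 then
      (if (i : ℕ) = 0 then -ρn⁻¹ else -ρn⁻¹ * ρ ⟨(i : ℕ) - 1, Nat.lt_of_le_of_lt (Nat.sub_le _ _) i.isLt⟩)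
    else if (i : ℕ) = (j : ℕ) + 1 then 1 else 0 with hS
  -- evaluation of R.mulVec
  have hmv : ∀ (v : Fin n → K) (i : Fin n), R.mulVec v i
      = -ρ i * v ⟨0, hn⟩ + (if h : (i : ℕ) + 1 < n then v ⟨(i : ℕ) + 1, h⟩ else 0) := by
    intro v i
    show ∑ j, R i j * v j = _
    by_cases h : (i : ℕ) + 1 < n
    · rw [dif_pos h]
      have he : ∀ j : Fin n, R i j * v j =
          (if j = (⟨0, hn⟩ : Fin n) then -ρ i * v ⟨0, hn⟩ else 0)
            + (if j = (⟨(i : ℕ) + 1, h⟩ : Fin n) then v ⟨(i : ℕ) + 1, h⟩ else 0) := by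
        intro j
        by_cases h0 : j = (⟨0, hn⟩ : Fin n)
        · subst h0
          rw [if_pos rfl, if_neg (by simp [Fin.ext_iff]), add_zero]
          have hval : R i ⟨0, hn⟩ = -ρ i := if_pos rfl
          rw [hval]
        · rw [if_neg h0]
          by_cases h1 : j = (⟨(i : ℕ) + 1, h⟩ : Fin n)
          · subst h1
            rw [if_pos rfl, zero_add]
            have hval : R i ⟨(i : ℕ) + 1, h⟩ = 1 := by
              show (if ((i : ℕ) + 1 : ℕ) = 0 then -ρ i else if (i : ℕ) + 1 = (i : ℕ) + 1 then 1 else 0) = 1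
              rw [if_neg (Nat.succ_ne_zero _), if_pos rfl]
            rw [hval, one_mul]
          · rw [if_neg h1, add_zero]
            have hval : R i j = 0 := by
              show (if (j : ℕ) = 0 then -ρ i else if (j : ℕ) = (i : ℕ) + 1 then 1 else 0) = 0
              rw [if_neg (fun hc => h0 (Fin.ext hc)), if_neg (fun hc => h1 (Fin.ext hc))]
            rw [hval, zero_mul]
      rw [Finset.sum_congr rfl (fun j _ => he j), Finset.sum_add_distrib,
        Fintype.sum_ite_eq', Fintype.sum_ite_eq']
    · rw [dif_neg h, add_zero]
      have he : ∀ j : Fin n, R i j * v j =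
          (if j = (⟨0, hn⟩ : Fin n) then -ρ i * v ⟨0, hn⟩ else 0) := by
        intro j
        by_cases h0 : j = (⟨0, hn⟩ : Fin n)
        · subst h0
          rw [if_pos rfl]
          have hval : R i ⟨0, hn⟩ = -ρ i := if_pos rfl
          rw [hval]
        · rw [if_neg h0]
          have hval : R i j = 0 := by
            show (if (j : ℕ) = 0 then -ρ i else if (j : ℕ) = (i : ℕ) + 1 then 1 else 0) = 0
            rw [if_neg (fun hc => h0 (Fin.ext hc)),
              if_neg (fun hc => absurd (hc ▸ j.isLt) (by omega))]
          rw [hval, zero_mul]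
      rw [Finset.sum_congr rfl (fun j _ => he j), Fintype.sum_ite_eq']
  -- entries of S
  have hS0 : ∀ k : Fin n, S ⟨0, hn⟩ k = if (k : ℕ) = n - 1 then -ρn⁻¹ else 0 := by
    intro k
    show (if (k : ℕ) = n - 1 then (if (0 : ℕ) = 0 then -ρn⁻¹ else _)
        else if (0 : ℕ) = (k : ℕ) + 1 then 1 else 0) = _
    by_cases hk : (k : ℕ) = n - 1
    · rw [if_pos hk, if_pos rfl, if_pos hk]
    · rw [if_neg hk, if_neg (by omega), if_neg hk]
  have hS1 : ∀ (i : Fin n) (h : (i : ℕ) + 1 < n) (k : Fin n), S ⟨(i : ℕ) + 1, h⟩ k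
      = if (k : ℕ) = n - 1 then -ρn⁻¹ * ρ i else if (i : ℕ) + 1 = (k : ℕ) + 1 then 1 else 0 := by
    intro i h k
    show (if (k : ℕ) = n - 1 then
        (if (i : ℕ) + 1 = 0 then -ρn⁻¹ else -ρn⁻¹ * ρ ⟨(i : ℕ) + 1 - 1, _⟩)
        else if (i : ℕ) + 1 = (k : ℕ) + 1 then 1 else 0) = _
    by_cases hk : (k : ℕ) = n - 1
    · rw [if_pos hk, if_pos hk, if_neg (Nat.succ_ne_zero _)]
      have hfin : (⟨(i : ℕ) + 1 - 1, Nat.lt_of_le_of_lt (Nat.sub_le _ _)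
          (Fin.isLt (⟨(i : ℕ) + 1, h⟩ : Fin n))⟩ : Fin n) = i := Fin.ext (by simp)
      rw [hfin]
    · rw [if_neg hk, if_neg hk]
  -- R * S = 1
  have hRS : R * S = 1 := by
    ext i k
    have h1 : (R * S) i k = R.mulVec (fun j => S j k) i := by
      rw [Matrix.mul_apply]; rfl
    rw [h1, hmv, Matrix.one_apply]
    by_cases h : (i : ℕ) + 1 < n
    · rw [dif_pos h]
      show -ρ i * S ⟨0, hn⟩ k + S ⟨(i : ℕ) + 1, h⟩ k = _
      rw [hS0, hS1 i h k]
      by_cases hk : (k : ℕ) = n - 1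
      · rw [if_pos hk, if_pos hk, if_neg (show ¬ i = k by rw [Fin.ext_iff]; omega)]
        ring
      · rw [if_neg hk, if_neg hk, mul_zero, zero_add]
        by_cases hik : i = k
        · rw [if_pos (by rw [hik]), if_pos hik]
        · rw [if_neg (by simp only [Fin.ext_iff] at hik ⊢; omega), if_neg hik]
    · rw [dif_neg h, add_zero]
      show -ρ i * S ⟨0, hn⟩ k = _
      rw [hS0]
      have hieq : (i : ℕ) = n - 1 := by have := i.isLt; omega
      by_cases hk : (k : ℕ) = n - 1
      · rw [if_pos hk, if_pos (show i = k from Fin.ext (by omega))]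
        have hiρ : ρ i = ρn := by rw [hρ]; exact congrArg ρ (Fin.ext (by simp [hieq]))
        rw [hiρ, neg_mul_neg, mul_inv_cancel₀ hρn]
      · rw [if_neg hk, mul_zero, if_neg (show ¬ i = k by rw [Fin.ext_iff]; omega)]
  have hinv : R⁻¹ = S := Matrix.inv_eq_right_inv hRS
  have hrecM : ∀ α, R.mulVec ((R⁻¹ ^ (α + 1)).mulVec V0) = (R⁻¹ ^ α).mulVec V0 := by
    intro α
    rw [pow_succ', Matrix.mulVec_mulVec, ← mul_assoc, hinv, hRS, one_mul]
  -- scalar sequences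
  set w : ℕ → ℕ → K := fun α k => if h : k < n then (R⁻¹ ^ α).mulVec V0 ⟨k, h⟩ else 0 with hw
  set ρ' : ℕ → K := fun k => if h : k < n then ρ ⟨k, h⟩ else 0 with hρ'
  have hwval : ∀ (α k : ℕ) (h : k < n), w α k = (R⁻¹ ^ α).mulVec V0 ⟨k, h⟩ :=
    fun α k h => dif_pos h
  have hρ'val : ∀ (k : ℕ) (h : k < n), ρ' k = ρ ⟨k, h⟩ := fun k h => dif_pos h
  have hw0 : ∀ k, w 0 k = if k = n - 1 then -1 else 0 := by
    intro k
    by_cases h : k < n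
    · rw [hwval 0 k h, pow_zero, Matrix.one_mulVec]
    · have h2 : k ≠ n - 1 := by omega
      rw [if_neg h2]
      exact dif_neg h
  have hrecw : ∀ α k, k < n - 1 → w α k = -(ρ' k) * w (α + 1) 0 + w (α + 1) (k + 1) := by
    intro α k hk
    have hk1 : k < n := by omega
    have hk2 : k + 1 < n := by omega
    have h0 := congrFun (hrecM α) ⟨k, hk1⟩
    rw [hmv] at h0
    rw [dif_pos hk2] at h0
    rw [hwval α k hk1, hwval (α + 1) 0 hn, hwval (α + 1) (k + 1) hk2, hρ'val k hk1]
    exact h0.symm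
  have hlastw : ∀ α, w α (n - 1) = -(ρ' (n - 1)) * w (α + 1) 0 := by
    intro α
    have hn1 : n - 1 < n := Nat.sub_lt hn one_pos
    have h0 := congrFun (hrecM α) ⟨n - 1, hn1⟩
    rw [hmv] at h0
    rw [dif_neg (show ¬ (n - 1 + 1 < n) by omega), add_zero] at h0
    rw [hwval α (n - 1) hn1, hwval (α + 1) 0 hn, hρ'val (n - 1) hn1]
    exact h0.symm
  have H := auxpoly (n - 1) ρ' w hw0 hrecw hlastw s
  have e1 : n - 1 + 1 = n := by omega
  rw [e1] at H
  refine ⟨∑ i ∈ Finset.range n, C (w s i) * X ^ (n - 1 - i), ?_, ?_⟩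
  · refine lt_of_le_of_lt (Polynomial.degree_sum_le _ _) ?_
    rw [Finset.sup_lt_iff (by exact_mod_cast WithBot.bot_lt_coe n)]
    intro i hi
    refine lt_of_le_of_lt (Polynomial.degree_C_mul_X_pow_le _ _) ?_
    exact_mod_cast (show n - 1 - i < n by omega)
  · have hu : (∑ i : Fin n, C (ρ i) * X ^ (n - 1 - (i : ℕ)))
        = ∑ i ∈ Finset.range n, C (ρ' i) * X ^ (n - 1 - i) := by
      rw [← Fin.sum_univ_eq_sum_range (fun i => C (ρ' i) * X ^ (n - 1 - i)) n]
      refine Finset.sum_congr rfl fun i _ => ?_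
      rw [hρ'val i i.isLt]
    have hsum : (∑ r ∈ Finset.Icc 1 s, C (((R⁻¹ ^ (s - r + 1)).mulVec V0) ⟨0, hn⟩) * X ^ (s - r))
        = ∑ j ∈ Finset.range s, C (w (j + 1) 0) * X ^ j := by
      refine Finset.sum_nbij' (fun r => s - r) (fun j => s - j) ?_ ?_ ?_ ?_ ?_
      · intro a ha
        rw [Finset.mem_Icc] at ha
        rw [Finset.mem_range]
        show s - a < s
        omega
      · intro a ha
        rw [Finset.mem_range] at ha
        rw [Finset.mem_Icc]
        show 1 ≤ s - a ∧ s - a ≤ s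
        omega
      · intro a ha
        rw [Finset.mem_Icc] at ha
        show s - (s - a) = a
        omega
      · intro a ha
        rw [Finset.mem_range] at ha
        show s - (s - a) = a
        omega
      · intro a ha
        show _ = C (w (s - a + 1) 0) * X ^ (s - a)
        rw [hwval (s - a + 1) 0 hn]
    rw [hu, hsum]
    exact H
end

section
/- In the Lie algebra g with structure relations {ℰ_r, ℰ_s} = (s-r)ℰ_{r+s-(n-m+2)} for r,s ∈ I₁^m, {ℰ_r, ℰ_s} = -(s-r)ℰ_{r+s-(n-m+2)} for r,s ∈ I₂^m, zero brackets between I₁^m and I₂^m elements, and {ℰ_1, ℰ_r} = 0, the subspace a = span{ℰ_1,...,ℰ_{κ₁}, ℰ_{n-κ₂+1},...,ℰ_n} with κ₁ = ⌊(n+3-m)/2⌋ and κ₂ = ⌊m/2⌋ is an Abelian Lie subalgebra. -/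
/-- The canonical basis vectors `ℰ_j`: the `j`-th basis vector of `K^n` for
`1 ≤ j ≤ n` and `0` otherwise. -/
noncomputable def paperE (K : Type*) [Field K] (n : ℕ) (j : ℤ) : Fin n → K :=
  if h : 1 ≤ j ∧ j ≤ n then Pi.single ⟨(j - 1).toNat, by omega⟩ (1 : K) else 0

lemma paperE_eq_zero (K : Type*) [Field K] (n : ℕ) (j : ℤ)
    (h : ¬(1 ≤ j ∧ j ≤ n)) : paperE K n j = 0 := dif_neg h

/-- In the Lie algebra `g` with structure relations
`{ℰ_r,ℰ_s} = (s-r)ℰ_{r+s-(n-m+2)}` for `r,s ∈ I₁ᵐ = {2,…,n-m+1}`,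
`{ℰ_r,ℰ_s} = -(s-r)ℰ_{r+s-(n-m+2)}` for `r,s ∈ I₂ᵐ = {n-m+2,…,n}`, zero brackets
between `I₁ᵐ` and `I₂ᵐ` elements, and `{ℰ₁,ℰ_r} = 0`, the subspace
`a = span{ℰ₁,…,ℰ_{κ₁}, ℰ_{n-κ₂+1},…,ℰ_n}` with `κ₁ = ⌊(n+3-m)/2⌋`, `κ₂ = ⌊m/2⌋`
is Abelian: all brackets among its generators vanish. -/
theorem stmt14 (K : Type*) [Field K] (n m : ℕ) (hn : 1 ≤ n) (hm : m ≤ n + 1) :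
    letI c : ℤ := (n : ℤ) - m + 2
    letI Br : ℤ → ℤ → (Fin n → K) := fun r s =>
      if r = 1 ∨ s = 1 then 0
      else if (2 ≤ r ∧ r ≤ (n : ℤ) - m + 1 ∧ r ≤ n) ∧
              (2 ≤ s ∧ s ≤ (n : ℤ) - m + 1 ∧ s ≤ n) then
        ((s - r : ℤ) : K) • paperE K n (r + s - c)
      else if ((n : ℤ) - m + 2 ≤ r ∧ 2 ≤ r ∧ r ≤ n) ∧
              ((n : ℤ) - m + 2 ≤ s ∧ 2 ≤ s ∧ s ≤ n) then
        -(((s - r : ℤ) : K) • paperE K n (r + s - c))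
      else 0
    letI κ₁ : ℤ := ((n : ℤ) + 3 - m) / 2
    letI κ₂ : ℤ := (m : ℤ) / 2
    ∀ r s : ℤ,
      (1 ≤ r ∧ r ≤ κ₁ ∨ (n : ℤ) - κ₂ + 1 ≤ r ∧ r ≤ n) →
      (1 ≤ s ∧ s ≤ κ₁ ∨ (n : ℤ) - κ₂ + 1 ≤ s ∧ s ≤ n) →
      Br r s = 0 := by
  intro r s hr hs
  beta_reduce
  by_cases h1 : r = 1 ∨ s = 1
  · simp only [if_pos h1]
  rw [if_neg h1]
  split_ifs with h2 h3
  · by_cases hrs : r = s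
    · simp [hrs]
    · rw [paperE_eq_zero, smul_zero]
      omega
  · by_cases hrs : r = s
    · simp [hrs]
    · rw [paperE_eq_zero, smul_zero, neg_zero]
      omega
  · rfl
end

section
/- In Viète coordinates, the interpolating polynomial v(x) = Σ_{i=1}^n λ_i^m μ_i ∏_{k≠i} (x-λ_k)/(λ_i - λ_k) equals -Σ_{k=1}^n (Σ_{i=1}^n (∂ρ_k/∂λ_i)(λ_i^m μ_i/Δ_i)) x^{n-k}, where ρ_k = (-1)^k s_k(λ) and Δ_i = ∏_{j≠i}(λ_i - λ_j). -/
open Polynomial Finset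

lemma aux_prod {K : Type*} [CommRing K] {σ : Type*} [DecidableEq σ] (s : Finset σ) (f : σ → K) :
    ∏ j ∈ s, (X - C (f j)) =
      ∑ j ∈ Finset.range (s.card + 1),
        C ((-1) ^ j * ∑ t ∈ s.powersetCard j, ∏ i ∈ t, f i) * X ^ (s.card - j) := by
  have h := Multiset.prod_X_sub_X_eq_sum_esymm (s.val.map f)
  rw [Multiset.map_map, Multiset.card_map, Finset.card_val] at h
  simp only [Finset.esymm_map_val] at h
  rw [Finset.prod]
  convert h using 2 with j hj
  · rfl
  · rw [map_mul, mul_assoc, map_pow, map_neg, map_one]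

lemma aux_reindex {M : Type*} [AddCommMonoid M] (n : ℕ) (g : ℕ → M) :
    ∑ k ∈ Finset.Icc 1 n, g k = ∑ j ∈ Finset.range n, g (j + 1) := by
  refine Finset.sum_bij' (fun k _ => k - 1) (fun j _ => j + 1) ?_ ?_ ?_ ?_ ?_ <;>
    simp_all +contextual [Finset.mem_Icc, Finset.mem_range] <;> omega


/-- In Viète coordinates, the interpolating polynomial
`v(x) = ∑ᵢ λᵢ^m μᵢ ∏_{k≠i}(x-λ_k)/(λᵢ-λ_k)` equals
`-∑_{k=1}^n (∑ᵢ (∂ρ_k/∂λᵢ)(λᵢ^m μᵢ/Δᵢ)) x^{n-k}`, where `ρ_k = (-1)^k s_k(λ)`,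
`∂ρ_k/∂λᵢ = (-1)^k e_{k-1}(λ with λᵢ removed)` and `Δᵢ = ∏_{j≠i}(λᵢ-λ_j)`. -/
theorem stmt17 {K : Type*} [Field K] (n : ℕ) (m : ℕ) (lam mu : Fin n → K)
    (hdist : Function.Injective lam) :
    letI e : ℕ → Finset (Fin n) → K := fun i s =>
      ∑ t ∈ s.powersetCard i, ∏ j ∈ t, lam j
    letI D : ℕ → Fin n → K := fun k i => (-1) ^ k * e (k - 1) (Finset.univ.erase i)
    letI Δ : Fin n → K := fun i => ∏ j ∈ Finset.univ.erase i, (lam i - lam j)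
    (∑ i : Fin n, C (lam i ^ m * mu i) *
        ∏ k ∈ Finset.univ.erase i, (C ((lam i - lam k)⁻¹) * (X - C (lam k))))
      = -∑ k ∈ Finset.Icc 1 n,
          C (∑ i : Fin n, D k i * (lam i ^ m * mu i / Δ i)) * X ^ (n - k) := by
  show (∑ i : Fin n, C (lam i ^ m * mu i) *
        ∏ k ∈ Finset.univ.erase i, (C ((lam i - lam k)⁻¹) * (X - C (lam k))))
      = -∑ k ∈ Finset.Icc 1 n,
          C (∑ i : Fin n, ((-1 : K) ^ k *
              ∑ t ∈ (Finset.univ.erase i).powersetCard (k - 1), ∏ j ∈ t, lam j) *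
            (lam i ^ m * mu i / ∏ j ∈ Finset.univ.erase i, (lam i - lam j))) * X ^ (n - k)
  have hcard : ∀ i : Fin n, (Finset.univ.erase i).card = n - 1 := fun i => by
    rw [Finset.card_erase_of_mem (Finset.mem_univ i), Finset.card_univ, Fintype.card_fin]
  simp only [map_sum, Finset.sum_mul, neg_eq_iff_eq_neg.symm, ← Finset.sum_neg_distrib]
  rw [Finset.sum_comm]
  refine Finset.sum_congr rfl fun i _ => ?_
  have hn : 1 ≤ n := i.pos
  -- normalize LHS
  rw [Finset.prod_mul_distrib, ← map_prod, ← mul_assoc, ← map_mul, Finset.prod_inv_distrib]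
  -- key product expansion
  have hk := aux_prod (Finset.univ.erase i) lam
  rw [hcard i, Nat.sub_add_cancel hn] at hk
  rw [hk, aux_reindex, Finset.mul_sum]
  refine Finset.sum_congr rfl fun j hj => ?_
  have h1 : n - (j + 1) = n - 1 - j := by omega
  have h2 : j + 1 - 1 = j := by omega
  rw [h1, h2, pow_succ]
  rw [← neg_mul, ← map_neg]
  rw [← mul_assoc, ← map_mul]
  congr 2
  field_simp
end
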